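/- arXiv:2305.17418 — 4 statements merged into one kernel-verified Lean document; each statement's English description precedes it below -/
import Mathlib

section
/- In the ray category of a distributive category, if J₃ * J₂ * J₁ = J₃ * J₁ ≠ 0 for subbimodules J₁ ⊆ A(x,y), J₂ ⊆ A(y,y), J₃ ⊆ A(y,z), then J₂ = A(y,y). -/
open CategoryTheory

namespace RayCat

variable (k : Type*) [Field k] {C : Type*} [Category C] [Preadditive C]
  [CategoryTheory.Linear k C]

/-- A `k`-subspace `J ⊆ A(x,y)` is a subbimodule if it is stable under composition with
endomorphisms of `x` and of `y`. -/
def IsSubbimodule {x y : C} (J : Submodule k (x ⟶ y)) : Prop :=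
  ∀ f ∈ J, ∀ (a : x ⟶ x) (b : y ⟶ y), a ≫ f ≫ b ∈ J

/-- The product `J'·J ⊆ A(x,z)` of subbimodules `J ⊆ A(x,y)` and `J' ⊆ A(y,z)`:
the subbimodule (here: subspace) generated by all compositions. -/
def prodBimod {x y z : C} (J : Submodule k (x ⟶ y)) (J' : Submodule k (y ⟶ z)) :
    Submodule k (x ⟶ z) :=
  Submodule.span k {h | ∃ f ∈ J, ∃ g ∈ J', h = f ≫ g}

/-- The triple product `J'·N(y)·J ⊆ A(x,z)`, where `N(y)` is the radical of the local
algebra `A(y,y)`, i.e. its set of non-invertible elements. -/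
def prodRadBimod {x y z : C} (J : Submodule k (x ⟶ y)) (J' : Submodule k (y ⟶ z)) :
    Submodule k (x ⟶ z) :=
  Submodule.span k
    {h | ∃ f ∈ J, ∃ n : y ⟶ y, ¬ IsIso n ∧ ∃ g ∈ J', h = f ≫ n ≫ g}

open Classical in
/-- The star product on the ray category: `J' * J := J'·J` unless
`J'·N(y)·J = J'·J ≠ 0`, in which case `J' * J := 0`.
(`starBimod k J J'` denotes `J' * J`.) -/
noncomputable def starBimod {x y z : C} (J : Submodule k (x ⟶ y))
    (J' : Submodule k (y ⟶ z)) : Submodule k (x ⟶ z) :=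
  if prodRadBimod k J J' = prodBimod k J J' ∧ prodBimod k J J' ≠ ⊥ then ⊥
  else prodBimod k J J'

/-- `A` is a distributive category: all Hom-spaces are finite dimensional, distinct
objects are not isomorphic, all endomorphism algebras are local, and each `A(x,y)` is
cyclic as a right `A(x,x)`-module or as a left `A(y,y)`-module. -/
def IsDistributive : Prop :=
  (∀ x y : C, FiniteDimensional k (x ⟶ y)) ∧
  (∀ x y : C, x ≠ y → IsEmpty (x ≅ y)) ∧
  (∀ c : C, IsLocalRing (End c)) ∧
  (∀ x y : C, (∃ g : x ⟶ y, ∀ f : x ⟶ y, ∃ a : x ⟶ x, f = a ≫ g) ∨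
              (∃ g : x ⟶ y, ∀ f : x ⟶ y, ∃ b : y ⟶ y, f = g ≫ b))

end RayCat

open RayCat

section Aux

variable (k : Type*) [Field k] {C : Type*} [Category C] [Preadditive C]
  [CategoryTheory.Linear k C]

/-- The triple product is contained in the double product, provided `J'` is a
subbimodule. -/
lemma prodRadBimod_le_prodBimod {x y z : C} (J : Submodule k (x ⟶ y))
    (J' : Submodule k (y ⟶ z)) (h' : IsSubbimodule k J') :
    prodRadBimod k J J' ≤ prodBimod k J J' := by
  apply Submodule.span_le.2
  rintro _ ⟨f, hf, n, hn, g, hg, rfl⟩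
  refine Submodule.subset_span ⟨f, hf, n ≫ g, ?_, rfl⟩
  simpa using h' g hg n (𝟙 z)

/-- Product with the zero bimodule is zero. -/
lemma prodBimod_bot {x y z : C} (J : Submodule k (x ⟶ y)) :
    prodBimod k J (⊥ : Submodule k (y ⟶ z)) = ⊥ := by
  rw [prodBimod, eq_bot_iff]
  apply Submodule.span_le.2
  rintro _ ⟨f, hf, g, hg, rfl⟩
  simp only [Submodule.mem_bot] at hg ⊢
  simp [hg]

end Aux

/-- in the ray category of a distributive category, if
`J₃ * J₂ * J₁ = J₃ * J₁ ≠ 0` for subbimodules `J₁ ⊆ A(x,y)`, `J₂ ⊆ A(y,y)`,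
`J₃ ⊆ A(y,z)`, then `J₂ = A(y,y)`. -/
theorem stmt1 (k : Type*) [Field k] {C : Type*} [Category C] [Preadditive C]
    [CategoryTheory.Linear k C] (hA : IsDistributive k (C := C))
    {x y z : C} (J₁ : Submodule k (x ⟶ y)) (J₂ : Submodule k (y ⟶ y))
    (J₃ : Submodule k (y ⟶ z))
    (h₁ : IsSubbimodule k J₁) (h₂ : IsSubbimodule k J₂) (h₃ : IsSubbimodule k J₃)
    (heq : starBimod k J₁ (starBimod k J₂ J₃) = starBimod k J₁ J₃)
    (hne : starBimod k J₁ J₃ ≠ ⊥) :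
    J₂ = ⊤ := by
  classical
  by_contra hJ₂
  -- every element of J₂ is non-invertible
  have hnoniso : ∀ f ∈ J₂, ¬ IsIso f := by
    intro f hf hiso
    apply hJ₂
    rw [eq_top_iff]
    intro g _
    have := h₂ f hf (g ≫ inv f) (𝟙 y)
    simpa using this
  -- analyze starBimod k J₁ J₃
  have hcond : ¬ (prodRadBimod k J₁ J₃ = prodBimod k J₁ J₃ ∧ prodBimod k J₁ J₃ ≠ ⊥) := by
    intro hc
    apply hne
    rw [starBimod, if_pos hc]
  have hstar13 : starBimod k J₁ J₃ = prodBimod k J₁ J₃ := by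
    rw [starBimod, if_neg hcond]
  have hPne : prodBimod k J₁ J₃ ≠ ⊥ := hstar13 ▸ hne
  have hRne : prodRadBimod k J₁ J₃ ≠ prodBimod k J₁ J₃ := by
    intro h
    exact hcond ⟨h, hPne⟩
  -- analyze starBimod k J₂ J₃
  have hK : starBimod k J₂ J₃ = prodBimod k J₂ J₃ := by
    rw [starBimod]
    split_ifs with h
    · -- then starBimod k J₁ ⊥ = ⊥, contradicting hne via heq
      exfalso
      apply hne
      have hK0 : starBimod k J₂ J₃ = ⊥ := by rw [starBimod, if_pos h]
      rw [← heq, hK0, starBimod]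
      split_ifs with h'
      · rfl
      · exact prodBimod_bot k J₁
    · rfl
  -- the key inclusion : prodBimod k J₁ (prodBimod k J₂ J₃) ≤ prodRadBimod k J₁ J₃
  have hincl : prodBimod k J₁ (prodBimod k J₂ J₃) ≤ prodRadBimod k J₁ J₃ := by
    apply Submodule.span_le.2
    rintro _ ⟨f, hf, g, hg, rfl⟩
    have hsub : prodBimod k J₂ J₃ ≤
        Submodule.comap (Linear.leftComp (R := k) z f) (prodRadBimod k J₁ J₃) := by
      apply Submodule.span_le.2
      rintro _ ⟨f₂, hf₂, f₃, hf₃, rfl⟩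
      simp only [SetLike.mem_coe, Submodule.mem_comap, Linear.leftComp_apply]
      exact Submodule.subset_span ⟨f, hf, f₂, hnoniso f₂ hf₂, f₃, hf₃, rfl⟩
    have := hsub hg
    simpa using this
  -- conclude : prodRadBimod k J₁ J₃ = prodBimod k J₁ J₃, contradiction
  apply hRne
  apply le_antisymm (prodRadBimod_le_prodBimod k J₁ J₃ h₃)
  have hstar : starBimod k J₁ (prodBimod k J₂ J₃) = prodBimod k J₁ J₃ := by
    rw [← hK, heq, hstar13]
  rw [starBimod] at hstar
  split_ifs at hstar with h
  · exact absurd hstar.symm hPne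
  · rw [← hstar]
    exact hincl.trans_eq rfl |>.trans (le_refl _) |>.trans (le_refl _)
end

section
/- Let A' be the one-point extension of a finite-dimensional algebra A by a nonzero A-module U, let S be the new simple A'-module and P its projective cover, so there is an exact sequence 0 → U → P → S → 0. Then P is injective as an A'-module if and only if U is an injective A-module with endomorphism algebra isomorphic to k. -/
section OnePointExtension

variable (k A U : Type*) [Field k] [Ring A] [Algebra k A]
  [AddCommGroup U] [Module k U] [Module A U] [IsScalarTower k A U]

/-- The product algebra `A × k` acts on `U` from the left through its first factor. -/
noncomputable instance opeLeftModule : Module (A × k) U :=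
  Module.compHom U (RingHom.fst A k)

/-- The ring homomorphism `(A × k)ᵐᵒᵖ → k` given by the second factor. -/
def opeSndOp : (A × k)ᵐᵒᵖ →+* k where
  toFun r := r.unop.2
  map_one' := rfl
  map_mul' r s := mul_comm s.unop.2 r.unop.2
  map_zero' := rfl
  map_add' r s := rfl

/-- The product algebra `A × k` acts on `U` from the right through its second factor. -/
noncomputable instance opeRightModule : Module (A × k)ᵐᵒᵖ U :=
  Module.compHom U (opeSndOp k A)

noncomputable instance opeSMulCommClass : SMulCommClass (A × k) (A × k)ᵐᵒᵖ U :=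
  ⟨fun r s u => by
    show r.1 • (s.unop.2 • u) = s.unop.2 • (r.1 • u)
    exact (smul_comm s.unop.2 r.1 u).symm⟩

/-- The one-point extension `A' = A[U]`: the triangular matrix algebra with entries
`A, U, 0, k`, realized as the trivial square-zero extension of `A × k` by the
`(A × k)`-bimodule `U` (with `A` acting on the left and `k` on the right). -/
noncomputable abbrev OnePointExt : Type _ := TrivSqZeroExt (A × k) U

/-- The idempotent of `A' = A[U]` at the extension vertex. -/
noncomputable def extIdem : OnePointExt k A U := TrivSqZeroExt.inl ((0 : A), (1 : k))

/-- `P = A'·e`: the projective cover of the new simple `S`; its radical is `U` and there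
is an exact sequence `0 → U → P → S → 0`. -/
noncomputable def ProjCover : Submodule (OnePointExt k A U) (OnePointExt k A U) :=
  Submodule.span (OnePointExt k A U) {extIdem k A U}

end OnePointExtension

/-!
Every `A'`-module `Y` has an `A`-part `(1 - e) Y`, on which `A'` acts through `A' → A`, and
the `A`-part of `P` is `U`. An `A'`-linear map `Y → P` is determined by its restriction
`(1 - e) Y → U`, since its head coefficient can be read off from the action of `U ⊆ A'`.
If `End_A U = k`, every `A`-linear `ψ : (1 - e) Y → U` is such a restriction: `u ↦ ψ (u • y)`
is a scalar, which serves as the head coefficient. So `Hom_{A'}(-, P) ≅ Hom_A((1 - e) -, U)`,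
which is exact when `U` is injective.

Conversely, `A`-modules are `A'`-modules through `A' → A`, which transports injectivity from `P`
to `U`. An endomorphism `φ` of `U = rad P` extends to an endomorphism of `P`; the latter is
determined by the image of `e`, so `φ` is multiplication by the head coefficient of that image.
-/

namespace OnePointExt

open TrivSqZeroExt

universe u

variable {k A : Type*} {U : Type u} [Field k] [Ring A] [AddCommGroup U]

@[simp] lemma prod_smul_eq [Module A U] (p : A × k) (u : U) : p • u = p.1 • u := rfl

@[simp] lemma op_prod_smul_eq [Module k U] (p : A × k) (u : U) :
    MulOpposite.op p • u = p.2 • u := rfl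

/-- Multiplicative but not unital: `inlA 1 = 1 - e`. -/
noncomputable abbrev inlA (a : A) : OnePointExt k A U := inl (a, 0)

@[simp] lemma fst_extIdem : (extIdem k A U).fst = (0, 1) := rfl

@[simp] lemma snd_extIdem : (extIdem k A U).snd = 0 := rfl

lemma inlA_one_add_extIdem : inlA 1 + extIdem k A U = 1 := by
  ext <;> simp

section Multiplication

variable [Module k U] [Module A U]

def toA : OnePointExt k A U →+* A where
  toFun r := r.fst.1
  map_one' := rfl
  map_mul' _ _ := rfl
  map_zero' := rfl
  map_add' _ _ := rfl

@[simp] lemma toA_apply (r : OnePointExt k A U) : toA r = r.fst.1 := rfl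

lemma toA_surjective : Function.Surjective (toA : OnePointExt k A U →+* A) :=
  fun a => ⟨inl (a, 0), rfl⟩

lemma mul_inlA_one (r : OnePointExt k A U) : r * inlA 1 = inlA (toA r) := by
  ext <;> simp

lemma inlA_one_mul (r : OnePointExt k A U) : inlA 1 * r = inlA (toA r) + inr r.snd := by
  ext <;> simp

lemma inlA_mul_inlA (a b : A) : (inlA a * inlA b : OnePointExt k A U) = inlA (a * b) := by
  ext <;> simp

lemma inlA_mul_inr (a : A) (u : U) : (inlA a * inr u : OnePointExt k A U) = inr (a • u) := by
  ext <;> simp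

lemma inr_mul (u : U) (r : OnePointExt k A U) : inr u * r = inr (r.fst.2 • u) := by
  ext <;> simp

lemma extIdem_mul_eq_zero {r : OnePointExt k A U} (hr : r.fst.2 = 0) :
    extIdem k A U * r = 0 := by
  ext <;> simp [hr]

lemma extIdem_mul_mul_extIdem (r : OnePointExt k A U) :
    extIdem k A U * r * extIdem k A U = extIdem k A U * r := by
  ext <;> simp

end Multiplication

variable [Algebra k A] [Module k U] [Module A U] [IsScalarTower k A U]

section APart

variable (k A U) (Y : Type*) [AddCommGroup Y] [Module (OnePointExt k A U) Y]

/-- The `A`-part `(1 - e) Y` of an `A'`-module `Y`. -/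
def aPart : Submodule (OnePointExt k A U) Y where
  carrier := {y | extIdem k A U • y = 0}
  add_mem' hy hz := by simp_all [smul_add]
  zero_mem' := smul_zero _
  smul_mem' r y (hy : _ = 0) := by
    show extIdem k A U • r • y = 0
    rw [← mul_smul, ← extIdem_mul_mul_extIdem, mul_smul, hy, smul_zero]

variable {k A U Y}

lemma mem_aPart {y : Y} : y ∈ aPart k A U Y ↔ extIdem k A U • y = 0 := Iff.rfl

lemma smul_mem_aPart {r : OnePointExt k A U} (hr : r.fst.2 = 0) (y : Y) :
    r • y ∈ aPart k A U Y := by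
  rw [mem_aPart, ← mul_smul, extIdem_mul_eq_zero hr, zero_smul]

lemma inlA_one_smul_of_mem_aPart {y : Y} (hy : y ∈ aPart k A U Y) :
    (inlA 1 : OnePointExt k A U) • y = y := by
  rw [← add_zero (_ • y), ← mem_aPart.mp hy, ← add_smul, inlA_one_add_extIdem, one_smul]

noncomputable instance : SMul A (aPart k A U Y) :=
  ⟨fun a y => (inlA a : OnePointExt k A U) • y⟩

lemma toA_smul_aPart (r : OnePointExt k A U) (y : aPart k A U Y) : toA r • y = r • y := by
  ext
  show (inlA (toA r) : OnePointExt k A U) • (y : Y) = r • (y : Y)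
  rw [← mul_inlA_one, mul_smul, inlA_one_smul_of_mem_aPart y.2]

noncomputable instance : Module A (aPart k A U Y) :=
  Function.Surjective.moduleLeft (M := aPart k A U Y) toA toA_surjective
    fun r y => toA_smul_aPart r y

lemma coe_smul_aPart (a : A) (y : aPart k A U Y) :
    ((a • y : aPart k A U Y) : Y) = (inlA a : OnePointExt k A U) • (y : Y) := rfl

end APart

section ProjCover

lemma mem_projCover_iff {x : OnePointExt k A U} : x ∈ ProjCover k A U ↔ x.fst.1 = 0 := by
  refine ⟨fun hx => ?_, fun hx => ?_⟩
  · obtain ⟨r, rfl⟩ := Submodule.mem_span_singleton.mp hx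
    simp
  · have hxe : x * extIdem k A U = x := by ext <;> simp [hx]
    exact hxe ▸ Submodule.smul_mem _ x (Submodule.mem_span_singleton_self _)

/-- Elements of `P = A'e` are the `(0, c, u)`: `c` is the image in the top `S = k` of `P`, and
`u` lies in its radical `U`. -/
def headCoeff : ProjCover k A U →+ k where
  toFun p := (p : OnePointExt k A U).fst.2
  map_zero' := rfl
  map_add' _ _ := rfl

def radPart : ProjCover k A U →+ U where
  toFun p := (p : OnePointExt k A U).snd
  map_zero' := rfl
  map_add' _ _ := rfl

noncomputable def mkProjCover (c : k) (u : U) : ProjCover k A U :=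
  ⟨⟨(0, c), u⟩, mem_projCover_iff.mpr rfl⟩

@[simp] lemma headCoeff_mkProjCover (c : k) (u : U) :
    headCoeff (mkProjCover (A := A) c u) = c := rfl

@[simp] lemma radPart_mkProjCover (c : k) (u : U) :
    radPart (mkProjCover (A := A) c u) = u := rfl

lemma projCover_ext {p q : ProjCover k A U} (h₁ : headCoeff p = headCoeff q)
    (h₂ : radPart p = radPart q) : p = q := by
  refine Subtype.ext (TrivSqZeroExt.ext (Prod.ext ?_ h₁) h₂)
  rw [mem_projCover_iff.mp p.2, mem_projCover_iff.mp q.2]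

lemma mkProjCover_add (c d : k) (u v : U) :
    mkProjCover (A := A) c u + mkProjCover d v = mkProjCover (c + d) (u + v) :=
  projCover_ext (by simp) (by simp)

@[simp] lemma headCoeff_smul (r : OnePointExt k A U) (p : ProjCover k A U) :
    headCoeff (r • p) = r.fst.2 * headCoeff p := rfl

@[simp] lemma radPart_smul (r : OnePointExt k A U) (p : ProjCover k A U) :
    radPart (r • p) = r.fst.1 • radPart p + headCoeff p • r.snd := rfl

lemma smul_mkProjCover (r : OnePointExt k A U) (c : k) (u : U) :
    r • mkProjCover (A := A) c u = mkProjCover (r.fst.2 * c) (r.fst.1 • u + c • r.snd) :=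
  projCover_ext (headCoeff_smul ..) (radPart_smul ..)

lemma mem_aPart_projCover_iff {p : ProjCover k A U} :
    p ∈ aPart k A U (ProjCover k A U) ↔ headCoeff p = 0 := by
  rw [mem_aPart]
  refine ⟨fun h => by simpa using congrArg headCoeff h, fun h => projCover_ext ?_ ?_⟩ <;>
    simp [h]

end ProjCover

noncomputable def aPartProjCoverEquiv : aPart k A U (ProjCover k A U) ≃ₗ[A] U where
  toFun p := radPart (p : ProjCover k A U)
  invFun u := ⟨mkProjCover 0 u, mem_aPart_projCover_iff.mpr rfl⟩
  map_add' p q := map_add radPart _ _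
  map_smul' a p := by simp [coe_smul_aPart]
  left_inv p := Subtype.ext (projCover_ext (mem_aPart_projCover_iff.mp p.2).symm rfl)
  right_inv u := rfl

section HomToProjCover

variable {Y : Type*} [AddCommGroup Y] [Module (OnePointExt k A U) Y]

noncomputable def aPartProj : Y →+ aPart k A U Y where
  toFun y := ⟨(inlA 1 : OnePointExt k A U) • y, smul_mem_aPart rfl y⟩
  map_zero' := Subtype.ext (smul_zero _)
  map_add' y z := Subtype.ext (smul_add _ y z)

lemma coe_aPartProj (y : Y) :
    ((aPartProj y : aPart k A U Y) : Y) = (inlA 1 : OnePointExt k A U) • y := rfl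

lemma inr_smul_mem_aPart (u : U) (y : Y) : (inr u : OnePointExt k A U) • y ∈ aPart k A U Y :=
  smul_mem_aPart rfl y

noncomputable def inrSmul (y : Y) : U →ₗ[A] aPart k A U Y where
  toFun u := ⟨(inr u : OnePointExt k A U) • y, inr_smul_mem_aPart u y⟩
  map_add' u v := Subtype.ext (by simp [inr_add, add_smul])
  map_smul' a u := Subtype.ext (by simp [coe_smul_aPart, ← mul_smul, inlA_mul_inr])

lemma aPartProj_smul (r : OnePointExt k A U) (y : Y) :
    (aPartProj (r • y) : aPart k A U Y) = toA r • aPartProj y + inrSmul y r.snd := by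
  ext
  simp only [coe_aPartProj, Submodule.coe_add, coe_smul_aPart, inrSmul, LinearMap.coe_mk,
    AddHom.coe_mk, ← mul_smul, inlA_mul_inlA, ← add_smul, inlA_one_mul, mul_one, toA_apply]

lemma radPart_apply_aPartProj (g : Y →ₗ[OnePointExt k A U] ProjCover k A U) (y : Y) :
    radPart (g ((inlA 1 : OnePointExt k A U) • y)) = radPart (g y) := by
  have hy : (inlA 1 : OnePointExt k A U) • y + extIdem k A U • y = y := by
    rw [← add_smul, inlA_one_add_extIdem, one_smul]
  conv_rhs => rw [← hy]
  simp

lemma headCoeff_smul_eq_radPart (g : Y →ₗ[OnePointExt k A U] ProjCover k A U) (y : Y) (u : U) :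
    headCoeff (g y) • u = radPart (g ((inr u : OnePointExt k A U) • y)) := by
  simp

theorem linearMap_ext_of_radPart [Nontrivial U]
    {g₁ g₂ : Y →ₗ[OnePointExt k A U] ProjCover k A U}
    (h : ∀ y ∈ aPart k A U Y, radPart (g₁ y) = radPart (g₂ y)) : g₁ = g₂ := by
  obtain ⟨u, hu⟩ := exists_ne (0 : U)
  refine LinearMap.ext fun y => projCover_ext ?_ ?_
  · apply smul_left_injective k hu
    simp only [headCoeff_smul_eq_radPart]
    exact h _ (inr_smul_mem_aPart u y)
  · rw [← radPart_apply_aPartProj, ← radPart_apply_aPartProj g₂]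
    exact h _ (smul_mem_aPart rfl y)

lemma algebraMap_apply_algEquiv {B : Type*} [Ring B] [Algebra k B] (e : B ≃ₐ[k] k) (b : B) :
    algebraMap k B (e b) = b := by
  simpa using (e.symm.commutes (e b)).symm

lemma inrSmul_add (y z : Y) :
    (inrSmul (y + z) : U →ₗ[A] aPart k A U Y) = inrSmul y + inrSmul z := by
  ext; simp [inrSmul, smul_add]

lemma inrSmul_smul (r : OnePointExt k A U) (y : Y) :
    (inrSmul (r • y) : U →ₗ[A] aPart k A U Y) =
      inrSmul y ∘ₗ algebraMap k (Module.End A U) r.fst.2 := by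
  ext; simp [inrSmul, ← mul_smul, inr_mul]

section Lift

variable (e : Module.End A U ≃ₐ[k] k) (ψ : aPart k A U Y →ₗ[A] U)

/-- The scalar by which `u ↦ ψ (u • y)` acts on `U`. -/
noncomputable def liftCoeff (y : Y) : k := e (ψ ∘ₗ inrSmul y)

lemma apply_inrSmul (y : Y) (u : U) : ψ (inrSmul y u) = liftCoeff e ψ y • u := by
  rw [← Module.algebraMap_end_apply k A, liftCoeff, algebraMap_apply_algEquiv]
  rfl

lemma liftCoeff_add (y z : Y) : liftCoeff e ψ (y + z) = liftCoeff e ψ y + liftCoeff e ψ z := by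
  simp only [liftCoeff, inrSmul_add, LinearMap.comp_add, map_add]

lemma liftCoeff_smul (r : OnePointExt k A U) (y : Y) :
    liftCoeff e ψ (r • y) = r.fst.2 * liftCoeff e ψ y := by
  rw [liftCoeff, inrSmul_smul, ← LinearMap.comp_assoc, ← Module.End.mul_eq_comp, map_mul,
    AlgEquiv.commutes, mul_comm]
  rfl

noncomputable def liftToProjCover : Y →ₗ[OnePointExt k A U] ProjCover k A U where
  toFun y := mkProjCover (liftCoeff e ψ y) (ψ (aPartProj y))
  map_add' y z := by simp only [liftCoeff_add, map_add, mkProjCover_add]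
  map_smul' r y := by
    rw [RingHom.id_apply, smul_mkProjCover, liftCoeff_smul, aPartProj_smul, map_add, map_smul,
      apply_inrSmul, toA_apply]

lemma radPart_liftToProjCover {y : Y} (hy : y ∈ aPart k A U Y) :
    radPart (liftToProjCover e ψ y) = ψ ⟨y, hy⟩ := by
  simp only [liftToProjCover, LinearMap.coe_mk, AddHom.coe_mk, radPart_mkProjCover]
  congr 1
  exact Subtype.ext (inlA_one_smul_of_mem_aPart hy)

end Lift

end HomToProjCover

section Restrict

variable {X Y : Type*} [AddCommGroup X] [Module (OnePointExt k A U) X]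
  [AddCommGroup Y] [Module (OnePointExt k A U) Y]

noncomputable def aPartMap (f : X →ₗ[OnePointExt k A U] Y) :
    aPart k A U X →ₗ[A] aPart k A U Y where
  toFun x := ⟨f x, by rw [mem_aPart, ← map_smul, mem_aPart.mp x.2, map_zero]⟩
  map_add' x y := Subtype.ext (map_add f (x : X) y)
  map_smul' a x := Subtype.ext (map_smul f (inlA a) (x : X))

lemma aPartMap_injective {f : X →ₗ[OnePointExt k A U] Y} (hf : Function.Injective f) :
    Function.Injective (aPartMap f) :=
  fun _ _ h => Subtype.ext (hf (congrArg Subtype.val h))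

end Restrict

theorem injective_projCover [Nontrivial U] [FiniteDimensional k A] [Module.Injective A U]
    (e : Module.End A U ≃ₐ[k] k) : Module.Injective (OnePointExt k A U) (ProjCover k A U) := by
  have : Small.{u} k :=
    small_of_injective (smul_left_injective k (exists_ne (0 : U)).choose_spec)
  have : Small.{u} A := Module.Finite.small k A
  refine ⟨fun X Y _ _ _ _ f hf g => ?_⟩
  obtain ⟨ψ, hψ⟩ := Module.Injective.extension_property A U _ _ (aPartMap f)
    (aPartMap_injective hf) (aPartProjCoverEquiv.toLinearMap ∘ₗ aPartMap g)
  have hG : liftToProjCover e ψ ∘ₗ f = g := linearMap_ext_of_radPart fun x hx => by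
    rw [LinearMap.comp_apply, radPart_liftToProjCover e ψ (y := f x) (aPartMap f ⟨x, hx⟩).2]
    exact LinearMap.congr_fun hψ ⟨x, hx⟩
  exact ⟨liftToProjCover e ψ, LinearMap.congr_fun hG⟩

theorem injective_of_injective_projCover
    [Module.Injective (OnePointExt k A U) (ProjCover k A U)] : Module.Injective A U := by
  refine ⟨fun X Y _ _ _ _ f hf g => ?_⟩
  let _ : Module (OnePointExt k A U) X := Module.compHom X toA
  let _ : Module (OnePointExt k A U) Y := Module.compHom Y toA
  let F : X →ₗ[OnePointExt k A U] Y := { f with map_smul' := fun r => f.map_smul (toA r) }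
  let G : X →ₗ[OnePointExt k A U] ProjCover k A U :=
    { toFun x := mkProjCover 0 (g x)
      map_add' x y := by rw [mkProjCover_add, map_add, add_zero]
      map_smul' r x := by
        rw [RingHom.id_apply, smul_mkProjCover, mul_zero, zero_smul, add_zero]
        exact congrArg _ (g.map_smul (toA r) x) }
  obtain ⟨H, hH⟩ := Module.Injective.extension_property _ _ X Y F hf G
  refine ⟨{ toFun y := radPart (H y), map_add' y z := by simp, map_smul' a y := ?_ },
    fun x => congrArg radPart (LinearMap.congr_fun hH x)⟩
  change radPart (H ((inlA a : OnePointExt k A U) • y)) = a • radPart (H y)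
  simp

noncomputable def radicalMap (φ : Module.End A U) :
    aPart k A U (ProjCover k A U) →ₗ[OnePointExt k A U] ProjCover k A U where
  toFun p := mkProjCover 0 (φ (radPart (p : ProjCover k A U)))
  map_add' p q := by simp [mkProjCover_add]
  map_smul' r p := by
    simp [smul_mkProjCover, mem_aPart_projCover_iff.mp p.2]

theorem algebraMap_end_surjective_of_injective_projCover
    [Module.Injective (OnePointExt k A U) (ProjCover k A U)] :
    Function.Surjective (algebraMap k (Module.End A U)) := by
  intro φ
  obtain ⟨ψ, hψ⟩ := Module.Injective.extension_property (OnePointExt k A U) (ProjCover k A U)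
    (aPart k A U (ProjCover k A U)) (ProjCover k A U) (Submodule.subtype _) Subtype.val_injective
    (radicalMap φ)
  refine ⟨headCoeff (ψ (mkProjCover 1 0)), LinearMap.ext fun u => ?_⟩
  have hu : (inr u : OnePointExt k A U) • (mkProjCover 1 0 : ProjCover k A U) =
      mkProjCover 0 u :=
    projCover_ext (by simp) (by simp)
  rw [Module.algebraMap_end_apply, headCoeff_smul_eq_radPart, hu]
  exact congrArg radPart (LinearMap.congr_fun hψ ⟨_, mem_aPart_projCover_iff.mpr rfl⟩)

end OnePointExt

theorem stmt4_general (k A U : Type*) [Field k] [Ring A] [Algebra k A]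
    [FiniteDimensional k A] [AddCommGroup U] [Module k U] [Module A U]
    [IsScalarTower k A U] [Nontrivial U] :
    Module.Injective (OnePointExt k A U) (ProjCover k A U) ↔
      (Module.Injective A U ∧ Nonempty ((Module.End A U) ≃ₐ[k] k)) := by
  refine ⟨fun _ => ⟨OnePointExt.injective_of_injective_projCover (k := k), ⟨?_⟩⟩,
    fun ⟨_, ⟨e⟩⟩ => OnePointExt.injective_projCover e⟩
  exact (AlgEquiv.ofBijective (Algebra.ofId k _) ⟨(algebraMap k _).injective,
    OnePointExt.algebraMap_end_surjective_of_injective_projCover (A := A)⟩).symm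

/-- let `A'` be the one-point extension of a finite-dimensional algebra `A`
over an algebraically closed field `k` by a nonzero `A`-module `U`, and let `P` be the
projective cover of the new simple `A'`-module.  Then `P` is injective as an `A'`-module
if and only if `U` is an injective `A`-module whose endomorphism algebra is isomorphic
to `k`. -/
theorem stmt4 (k A U : Type*) [Field k] [IsAlgClosed k] [Ring A] [Algebra k A]
    [FiniteDimensional k A] [AddCommGroup U] [Module k U] [Module A U]
    [IsScalarTower k A U] [FiniteDimensional k U] [Nontrivial U] :
    Module.Injective (OnePointExt k A U) (ProjCover k A U) ↔
      (Module.Injective A U ∧ Nonempty ((Module.End A U) ≃ₐ[k] k)) :=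
  stmt4_general k A U
end

section
/- Let k be a field. The system of equations x₁y₁ = z₁², x₂y₁ + x₁y₂ = 2z₁z₂, x₁y₁ + x₁y₂ + x₂y₁ = 0 has a solution (x₁,x₂,y₁,y₂,z₁,z₂) ∈ k⁶ with x₁y₁z₁ ≠ 0 if and only if the characteristic of k is not 2. -/
/-! Eliminating `x₂y₁ + x₁y₂` between the last two equations gives `x₁y₁ = -2z₁z₂`, so in
characteristic `2` every solution has `x₁y₁ = 0`. When `2` is invertible,
`(x₁, x₂, y₁, y₂, z₁, z₂) = (1, -1, 1, 0, 1, -1/2)` is a solution. -/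

theorem mul_eq_neg_two_mul_mul_of_add_eq {R : Type*} [CommRing R] {x₁ x₂ y₁ y₂ z₁ z₂ : R}
    (h₂ : x₂ * y₁ + x₁ * y₂ = 2 * z₁ * z₂) (h₃ : x₁ * y₁ + x₁ * y₂ + x₂ * y₁ = 0) :
    x₁ * y₁ = -(2 * z₁ * z₂) := by
  linear_combination h₃ - h₂

theorem exists_solution_of_invertible_two (R : Type*) [CommRing R] [Nontrivial R]
    [Invertible (2 : R)] :
    ∃ x₁ x₂ y₁ y₂ z₁ z₂ : R,
      x₁ * y₁ = z₁ ^ 2 ∧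
      x₂ * y₁ + x₁ * y₂ = 2 * z₁ * z₂ ∧
      x₁ * y₁ + x₁ * y₂ + x₂ * y₁ = 0 ∧
      x₁ * y₁ * z₁ ≠ 0 :=
  ⟨1, -1, 1, 0, 1, -⅟2, by ring, by simp, by ring, by simp⟩

/-- Over a field `k`, the system `x₁y₁ = z₁²`, `x₂y₁ + x₁y₂ = 2z₁z₂`,
`x₁y₁ + x₁y₂ + x₂y₁ = 0` has a solution with `x₁y₁z₁ ≠ 0` iff `char k ≠ 2`. -/
theorem stmt5 (k : Type*) [Field k] :
    (∃ x₁ x₂ y₁ y₂ z₁ z₂ : k,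
        x₁ * y₁ = z₁ ^ 2 ∧
        x₂ * y₁ + x₁ * y₂ = 2 * z₁ * z₂ ∧
        x₁ * y₁ + x₁ * y₂ + x₂ * y₁ = 0 ∧
        x₁ * y₁ * z₁ ≠ 0) ↔ ringChar k ≠ 2 := by
  constructor
  · rintro ⟨x₁, x₂, y₁, y₂, z₁, z₂, -, h₂, h₃, hne⟩ hchar
    have htwo : (2 : k) = 0 := by
      exact_mod_cast (ringChar.spec k 2).mpr hchar.dvd
    apply hne
    rw [mul_eq_neg_two_mul_mul_of_add_eq h₂ h₃, htwo]
    ring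
  · intro hchar
    have := invertibleOfNonzero (Ring.two_ne_zero hchar)
    exact exists_solution_of_invertible_two k
end

section
/- Let Q be a finite connected quiver in which every arrow lies on a cycle, every vertex lies on exactly two cycles, and any two distinct cycles have at most one vertex in common. Then the graph G(Q) whose vertices are the cycles of Q, with an edge between two cycles whenever they share a vertex, is a tree; consequently the cycles of Q can be 2-colored (into α-cycles and β-cycles) so that intersecting cycles have different colors. -/
namespace BrauerQuiver

variable {V E : Type*}

/-- A set of arrows `C` of a quiver (directed multigraph with source `s` and target `t`)
forms an oriented cycle through distinct vertices: it is nonempty, every visited vertex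
has exactly one outgoing arrow in `C` (so the vertices are distinct), every arrow in `C`
has a successor in `C`, and `C` is connected under consecutiveness. -/
def IsCycleSet (s t : E → V) (C : Set E) : Prop :=
  C.Nonempty ∧
  Set.InjOn s C ∧
  (∀ e ∈ C, ∃ e' ∈ C, s e' = t e) ∧
  (∀ e ∈ C, ∀ e' ∈ C,
    Relation.ReflTransGen (fun a b => a ∈ C ∧ b ∈ C ∧ t a = s b) e e')

/-- The set of vertices of a set of arrows. -/
def verts (s : E → V) (C : Set E) : Set V := s '' C

end BrauerQuiver

open BrauerQuiver

/-!
A path in the quiver moves between cycles through shared vertices, so the meet graph is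
connected. If it had a cycle, a shortest one would be an induced cycle `D₀, …, Dₙ₋₁` with
`n ≥ 3`. Choose `vᵢ ∈ Dᵢ ∩ Dᵢ₊₁` and follow `Dᵢ₊₁` from `vᵢ` to `vᵢ₊₁`. Since the `Dᵢ` form an
induced cycle and two cycles meet in at most one vertex, these arcs meet only at their ends,
so together they form a new cycle of the quiver. Through each `vᵢ` it must be `Dᵢ` or `Dᵢ₊₁`;
but if it is `Dⱼ`, this fails at `vⱼ₊₁`. Finally, a tree is 2-colorable.
-/

open Relation

theorem Fin.val_sub_eq_one_iff {n : ℕ} (hn : n ≠ 1) (a b : Fin n) :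
    (b - a).val = 1 ↔ b.val = a.val + 1 ∨ (b.val = 0 ∧ a.val + 1 = n) := by
  have := a.isLt
  rcases le_or_gt a b with h | h
  · rw [Fin.coe_sub_iff_le.2 h, Fin.le_def] at *
    omega
  · rw [Fin.coe_sub_iff_lt.2 h, Fin.lt_def] at *
    omega

open Fin.NatCast in
theorem Fin.reflTransGen_add_one {n : ℕ} [NeZero n] (i j : Fin n) :
    ReflTransGen (fun a b : Fin n => b = a + 1) i j := by
  have key : ∀ k : ℕ, ReflTransGen (fun a b : Fin n => b = a + 1) i (i + k) := by
    intro k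
    induction k with
    | zero => rw [Nat.cast_zero, add_zero]
    | succ k ih => exact ih.tail (by rw [Nat.cast_succ, add_assoc])
  simpa using key (j - i).val

namespace SimpleGraph

variable {α : Type*} {G : SimpleGraph α}

namespace Walk

theorem IsCycle.isCycle_cons_drop {u : α} {c : G.Walk u u} (hc : c.IsCycle) {k : ℕ} (hk : 0 < k)
    (hadj : G.Adj u (c.getVert k)) (hnot : s(u, c.getVert k) ∉ c.edges) :
    (cons hadj (c.drop k)).IsCycle :=
  (cons_isCycle_iff _ _).2
    ⟨hc.isPath_drop hk, fun h => hnot (List.mem_of_mem_drop (edges_drop c k ▸ h))⟩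

theorem IsCycle.isChordless_of_forall_length_le {u : α} {c : G.Walk u u} (hc : c.IsCycle)
    (hmin : ∀ (v : α) (d : G.Walk v v), d.IsCycle → c.length ≤ d.length) : c.IsChordless := by
  classical
  rw [isChordless_iff_forall_mem_edges]
  intro x y hx hy hxy
  by_contra hxy_mem
  have hc' := hc.rotate hx
  have hmin' : ∀ (v : α) (d : G.Walk v v), d.IsCycle → (c.rotate x hx).length ≤ d.length := by
    simpa using hmin
  rw [← (rotate_edges c x hx).mem_iff] at hxy_mem
  rw [← mem_support_rotate_iff c x hx] at hy
  generalize c.rotate x hx = c' at hc' hmin' hxy_mem hy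
  obtain ⟨k, rfl, hk⟩ := mem_support_iff_exists_getVert.1 hy
  -- the chord closes `c'.drop k` into a cycle of length `c'.length - k + 1`
  have hk0 : k ≠ 0 := by rintro rfl; exact hxy.ne (getVert_zero c').symm
  have hkl : k ≠ c'.length := by rintro rfl; exact hxy.ne (getVert_length c').symm
  have hk1 : k ≠ 1 := by
    rintro rfl
    exact hxy_mem ((mk_mem_edges_iff_exists c').2 ⟨0, by omega, by rw [getVert_zero]⟩)
  have := hmin' x _ (hc'.isCycle_cons_drop (Nat.pos_of_ne_zero hk0) hxy hxy_mem)
  rw [length_cons, drop_length] at this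
  omega

theorem IsCycle.getVert_eq_getVert_iff {u : α} {c : G.Walk u u} (hc : c.IsCycle) {i j : ℕ}
    (hi : i < c.length) (hj : j < c.length) : c.getVert i = c.getVert j ↔ i = j :=
  ⟨fun h => hc.getVert_injOn' (show i ≤ c.length - 1 by omega) (show j ≤ c.length - 1 by omega) h,
    congrArg _⟩

theorem IsCycle.val_sub_eq_one_iff {u : α} {c : G.Walk u u} (hc : c.IsCycle)
    (a b : Fin c.length) : (b - a).val = 1 ↔ c.getVert (a + 1) = c.getVert b := by
  have ha := a.isLt
  rw [Fin.val_sub_eq_one_iff (by have := hc.three_le_length; omega)]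
  constructor
  · rintro (h | ⟨h0, h1⟩)
    · rw [h]
    · rw [h0, h1, getVert_length, getVert_zero]
  · intro h
    by_cases ha' : a.val + 1 < c.length
    · exact .inl ((hc.getVert_eq_getVert_iff ha' b.isLt).1 h).symm
    · have h0 : c.getVert 0 = c.getVert b := by
        rw [getVert_zero, ← h, show a.val + 1 = c.length by omega, getVert_length]
      exact .inr ⟨((hc.getVert_eq_getVert_iff (by omega) b.isLt).1 h0).symm, by omega⟩

theorem IsCycle.adj_getVert_iff {u : α} {c : G.Walk u u} (hc : c.IsCycle) (hch : c.IsChordless)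
    (a b : Fin c.length) :
    G.Adj (c.getVert a) (c.getVert b) ↔ c.getVert (a + 1) = c.getVert b ∨
      c.getVert (b + 1) = c.getVert a := by
  constructor
  · intro h
    obtain ⟨i, hi, he⟩ := (mk_mem_edges_iff_exists c).1
      (hch.mem_edges (getVert_mem_support _ _) (getVert_mem_support _ _) h)
    rcases Sym2.eq_iff.1 he with ⟨h1, h2⟩ | ⟨h1, h2⟩
    · exact .inl ((hc.getVert_eq_getVert_iff hi a.isLt).1 h1 ▸ h2)
    · exact .inr ((hc.getVert_eq_getVert_iff hi b.isLt).1 h1 ▸ h2)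
  · rintro (h | h)
    · exact h ▸ c.adj_getVert_succ a.isLt
    · exact (h ▸ c.adj_getVert_succ b.isLt).symm

theorem IsCycle.cycleGraph_isIndContained {u : α} {c : G.Walk u u} (hc : c.IsCycle)
    (hch : c.IsChordless) : cycleGraph c.length ⊴ G := by
  refine ⟨⟨⟨fun i => c.getVert i, fun a b h => Fin.ext ?_⟩, ?_⟩⟩
  · exact (hc.getVert_eq_getVert_iff a.isLt b.isLt).1 h
  · intro a b
    change G.Adj (c.getVert a) (c.getVert b) ↔ _
    rw [hc.adj_getVert_iff hch, cycleGraph_adj', hc.val_sub_eq_one_iff, hc.val_sub_eq_one_iff]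
    exact or_comm

end Walk

theorem exists_cycleGraph_isIndContained (h : ¬G.IsAcyclic) : ∃ n, cycleGraph (n + 3) ⊴ G := by
  obtain ⟨u, c, hc, hgirth⟩ := exists_girth_eq_length.2 h
  have hch := hc.isChordless_of_forall_length_le fun v d hd => hgirth ▸ girth_le_length hd
  refine ⟨c.length - 3, ?_⟩
  rw [Nat.sub_add_cancel hc.three_le_length]
  exact hc.cycleGraph_isIndContained hch

end SimpleGraph

namespace BrauerQuiver

open SimpleGraph

variable {V E : Type*} {s t : E → V}

def Consecutive (s t : E → V) (A : Set E) (a b : E) : Prop := a ∈ A ∧ b ∈ A ∧ t a = s b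

theorem reflTransGen_consecutive_mono {A B : Set E} (hAB : A ⊆ B) {a b : E}
    (h : ReflTransGen (Consecutive s t A) a b) : ReflTransGen (Consecutive s t B) a b :=
  ReflTransGen.mono (fun _ _ hab => ⟨hAB hab.1, hAB hab.2.1, hab.2.2⟩) _ _ h

theorem IsCycleSet.reflTransGen {C : Set E} (hC : IsCycleSet s t C) {a b : E} (ha : a ∈ C)
    (hb : b ∈ C) : ReflTransGen (Consecutive s t C) a b :=
  hC.2.2.2 a ha b hb

theorem IsCycleSet.target_mem_verts {C : Set E} (hC : IsCycleSet s t C) {e : E} (he : e ∈ C) :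
    t e ∈ verts s C := by
  obtain ⟨e', he', hs⟩ := hC.2.2.1 e he
  exact ⟨e', he', hs⟩

/-- The arrows met when walking along `C` from the arrow `h` until the vertex `w` is reached. -/
def arc (s t : E → V) (C : Set E) (h : E) (w : V) : Set E :=
  {e | ReflTransGen (fun a b => Consecutive s t C a b ∧ s b ≠ w) h e}

section Arc

variable {C : Set E} {h e : E} {w : V}

theorem mem_arc_self : h ∈ arc s t C h w := ReflTransGen.refl

theorem arc_subset (hh : h ∈ C) : arc s t C h w ⊆ C := fun _ he => by
  rcases he.cases_tail with rfl | ⟨_, -, hae⟩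
  exacts [hh, hae.1.2.1]

theorem source_ne_of_mem_arc (hw : s h ≠ w) (he : e ∈ arc s t C h w) : s e ≠ w := by
  rcases he.cases_tail with rfl | ⟨_, -, hae⟩
  exacts [hw, hae.2]

theorem reflTransGen_of_mem_arc (he : e ∈ arc s t C h w) :
    ReflTransGen (Consecutive s t (arc s t C h w)) h e := by
  induction he with
  | refl => rfl
  | tail hab hbc ih => exact ih.tail ⟨hab, hab.tail hbc, hbc.1.2.2⟩

theorem exists_succ_of_mem_arc (hC : IsCycleSet s t C) (hh : h ∈ C) (he : e ∈ arc s t C h w) :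
    t e = w ∨ ∃ e' ∈ arc s t C h w, s e' = t e := by
  obtain ⟨e', he', hs⟩ := hC.2.2.1 e (arc_subset hh he)
  by_cases hw : t e = w
  · exact .inl hw
  · exact .inr ⟨e', he.tail ⟨⟨arc_subset hh he, he', hs.symm⟩, hs ▸ hw⟩, hs⟩

theorem exists_reflTransGen_target_eq (hC : IsCycleSet s t C) (hh : h ∈ C) (hw : s h ≠ w)
    (hwC : w ∈ verts s C) (he : e ∈ arc s t C h w) :
    ∃ e' ∈ arc s t C h w, t e' = w ∧ ReflTransGen (Consecutive s t (arc s t C h w)) e e' := by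
  obtain ⟨f, hf, rfl⟩ := hwC
  have hef := hC.reflTransGen (arc_subset hh he) hf
  revert he
  induction hef using ReflTransGen.head_induction_on with
  | refl => exact fun ha => absurd rfl (source_ne_of_mem_arc hw ha)
  | @head a c hac _ ih =>
    intro ha
    by_cases ht : t a = s f
    · exact ⟨a, ha, ht, .refl⟩
    · have hc : c ∈ arc s t C h (s f) := ha.tail ⟨hac, hac.2.2 ▸ ht⟩
      obtain ⟨e', he', hte', hr⟩ := ih hc
      exact ⟨e', he', hte', .head ⟨ha, hc, hac.2.2⟩ hr⟩

theorem isCycleSet_iUnion_arc {n : ℕ} [NeZero n] {C : Fin n → Set E} {h : Fin n → E}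
    {v : Fin n → V} (hC : ∀ i, IsCycleSet s t (C i)) (hh : ∀ i, h i ∈ C i)
    (hhv : ∀ i, s (h i) = v i) (hv : ∀ i, v (i + 1) ∈ verts s (C i)) (hne : ∀ i, v i ≠ v (i + 1))
    (hinj : Set.InjOn s (⋃ i, arc s t (C i) (h i) (v (i + 1)))) :
    IsCycleSet s t (⋃ i, arc s t (C i) (h i) (v (i + 1))) := by
  have hA := Set.subset_iUnion fun i => arc s t (C i) (h i) (v (i + 1))
  have to_next : ∀ i, ∀ e ∈ arc s t (C i) (h i) (v (i + 1)),
      ReflTransGen (Consecutive s t (⋃ i, arc s t (C i) (h i) (v (i + 1)))) e (h (i + 1)) := by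
    intro i e he
    obtain ⟨e', he', ht, hr⟩ :=
      exists_reflTransGen_target_eq (hC i) (hh i) (hhv i ▸ hne i) (hv i) he
    exact (reflTransGen_consecutive_mono (hA i) hr).tail
      ⟨hA i he', hA _ mem_arc_self, ht.trans (hhv _).symm⟩
  have heads : ∀ i j,
      ReflTransGen (Consecutive s t (⋃ i, arc s t (C i) (h i) (v (i + 1)))) (h i) (h j) :=
    fun i j => ReflTransGen.lift' h (by rintro a _ rfl; exact to_next a _ mem_arc_self) i j
      (Fin.reflTransGen_add_one i j)
  refine ⟨⟨h 0, hA 0 mem_arc_self⟩, hinj, fun e he => ?_, fun e he e' he' => ?_⟩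
  · obtain ⟨i, he⟩ := Set.mem_iUnion.1 he
    rcases exists_succ_of_mem_arc (hC i) (hh i) he with ht | ⟨e', he', hs'⟩
    · exact ⟨h (i + 1), hA _ mem_arc_self, (hhv _).trans ht.symm⟩
    · exact ⟨e', hA i he', hs'⟩
  · obtain ⟨i, he⟩ := Set.mem_iUnion.1 he
    obtain ⟨j, he'⟩ := Set.mem_iUnion.1 he'
    exact ((to_next i e he).trans (heads _ j)).trans
      (reflTransGen_consecutive_mono (hA j) (reflTransGen_of_mem_arc he'))

end Arc

abbrev CycleSet (s t : E → V) := {C : Set E // IsCycleSet s t C}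

def meetGraph (s t : E → V) : SimpleGraph (CycleSet s t) where
  Adj C₁ C₂ := C₁ ≠ C₂ ∧ (verts s C₁.1 ∩ verts s C₂.1).Nonempty
  symm := ⟨fun _ _ h => ⟨h.1.symm, by rw [Set.inter_comm]; exact h.2⟩⟩
  loopless := ⟨fun _ h => h.1 rfl⟩

theorem meetGraph_adj {C₁ C₂ : CycleSet s t} :
    (meetGraph s t).Adj C₁ C₂ ↔ C₁ ≠ C₂ ∧ (verts s C₁.1 ∩ verts s C₂.1).Nonempty :=
  Iff.rfl

def AtMostTwoCyclesThrough (s t : E → V) : Prop :=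
  ∀ (x : V) (C₁ C₂ C : CycleSet s t), C₁ ≠ C₂ → x ∈ verts s C₁.1 → x ∈ verts s C₂.1 →
    x ∈ verts s C.1 → C = C₁ ∨ C = C₂

def CyclesMeetAtMostOnce (s t : E → V) : Prop :=
  ∀ C₁ C₂ : CycleSet s t, C₁ ≠ C₂ → (verts s C₁.1 ∩ verts s C₂.1).Subsingleton

theorem meetGraph_reachable_of_mem_verts {C D : CycleSet s t} {x : V} (hC : x ∈ verts s C.1)
    (hD : x ∈ verts s D.1) : (meetGraph s t).Reachable C D := by
  by_cases h : C = D
  · exact h ▸ .refl _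
  · exact (meetGraph_adj.2 ⟨h, x, hC, hD⟩).reachable

theorem meetGraph_connected [Nonempty V]
    (hconn : ∀ v w : V, ReflTransGen
      (fun a b => ∃ e : E, (s e = a ∧ t e = b) ∨ (s e = b ∧ t e = a)) v w)
    (harrow : ∀ e : E, ∃ C : Set E, IsCycleSet s t C ∧ e ∈ C)
    (hvert : ∀ v : V, ∃ C : CycleSet s t, v ∈ verts s C.1) : (meetGraph s t).Connected := by
  choose cyc hcyc using hvert
  have hstep : ∀ x y, (∃ e, (s e = x ∧ t e = y) ∨ (s e = y ∧ t e = x)) →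
      (meetGraph s t).Reachable (cyc x) (cyc y) := by
    rintro x y ⟨e, he⟩
    obtain ⟨D, hD, heD⟩ := harrow e
    have hxy : x ∈ verts s D ∧ y ∈ verts s D := by
      rcases he with ⟨rfl, rfl⟩ | ⟨rfl, rfl⟩
      exacts [⟨⟨e, heD, rfl⟩, hD.target_mem_verts heD⟩, ⟨hD.target_mem_verts heD, ⟨e, heD, rfl⟩⟩]
    exact (meetGraph_reachable_of_mem_verts (D := ⟨D, hD⟩) (hcyc x) hxy.1).trans
      (meetGraph_reachable_of_mem_verts hxy.2 (hcyc y))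
  rw [SimpleGraph.connected_iff]
  refine ⟨fun C D => ?_, ⟨cyc (Classical.arbitrary V)⟩⟩
  obtain ⟨e, he⟩ := C.2.1
  obtain ⟨f, hf⟩ := D.2.1
  have hreach : ∀ x y, (meetGraph s t).Reachable (cyc x) (cyc y) := fun x y => by
    induction hconn x y with
    | refl => rfl
    | tail _ hxy ih => exact ih.trans (hstep _ _ hxy)
  exact ((meetGraph_reachable_of_mem_verts ⟨e, he, rfl⟩ (hcyc _)).trans (hreach _ _)).trans
    (meetGraph_reachable_of_mem_verts (hcyc _) ⟨f, hf, rfl⟩)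

theorem injOn_iUnion_arc (honce : CyclesMeetAtMostOnce s t) {m : ℕ}
    (φ : cycleGraph (m + 3) ↪g meetGraph s t) {h : Fin (m + 3) → E}
    {v : Fin (m + 3) → V} (hh : ∀ i, h i ∈ (φ (i + 1)).1)
    (hv : ∀ i, v i ∈ verts s (φ i).1 ∩ verts s (φ (i + 1)).1) (hs : ∀ i, s (h i) ≠ v (i + 1)) :
    Set.InjOn s (⋃ i, arc s t (φ (i + 1)).1 (h i) (v (i + 1))) := by
  have not_next : ∀ i e, e ∈ arc s t (φ (i + 1)).1 (h i) (v (i + 1)) →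
      s e ∉ verts s (φ (i + 1 + 1)).1 := fun i e he hse =>
    source_ne_of_mem_arc (hs i) he <|
      honce _ _ (φ.injective.ne (add_ne_left.2 one_ne_zero)).symm
        ⟨⟨e, arc_subset (hh i) he, rfl⟩, hse⟩ (hv (i + 1))
  rintro e he e' he' hee'
  obtain ⟨i, he⟩ := Set.mem_iUnion.1 he
  obtain ⟨j, he'⟩ := Set.mem_iUnion.1 he'
  have hei := arc_subset (hh i) he
  have hej := arc_subset (hh j) he'
  by_cases hij : i = j
  · subst hij
    exact (φ (i + 1)).2.2.1 hei hej hee'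
  have hadj : (meetGraph s t).Adj (φ (i + 1)) (φ (j + 1)) := meetGraph_adj.2
    ⟨φ.injective.ne ((add_left_injective 1).ne hij), s e, ⟨e, hei, rfl⟩, ⟨e', hej, hee'.symm⟩⟩
  rcases (φ.map_adj_iff.trans (cycleGraph_adj (n := m + 1))).1 hadj with hd | hd
  · rw [add_sub_add_right_eq_sub, sub_eq_iff_eq_add'] at hd
    subst hd
    exact (not_next j e' he' ⟨e, hei, hee'⟩).elim
  · rw [add_sub_add_right_eq_sub, sub_eq_iff_eq_add'] at hd
    subst hd
    exact (not_next i e he ⟨e', hej, hee'.symm⟩).elim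

theorem not_cycleGraph_isIndContained (htwo : AtMostTwoCyclesThrough s t)
    (honce : CyclesMeetAtMostOnce s t) (m : ℕ) :
    ¬cycleGraph (m + 3) ⊴ meetGraph s t := by
  rintro ⟨φ⟩
  have hsucc : ∀ i, (meetGraph s t).Adj (φ i) (φ (i + 1)) := fun i =>
    φ.map_adj_iff.2 (cycleGraph_adj.2 (.inr (add_sub_cancel_left i 1)))
  have hne₁ : ∀ i, φ (i + 1) ≠ φ i := fun i => φ.injective.ne (add_ne_left.2 one_ne_zero)
  have hne₂ : ∀ i, φ (i + 1 + 1) ≠ φ i := fun i => φ.injective.ne <| by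
    rw [add_assoc, Ne, add_eq_left, Fin.ext_iff, Fin.val_add, Fin.val_one, Fin.val_zero,
      Nat.mod_eq_of_lt (by omega)]
    omega
  choose v hv using fun i => (hsucc i).2
  have hvne : ∀ i, v i ≠ v (i + 1) := fun i hvi => by
    rcases htwo (v i) _ _ (φ (i + 1 + 1)) (hne₁ i).symm (hv i).1 (hv i).2 (hvi ▸ (hv (i + 1)).2)
      with h | h
    exacts [hne₂ i h, hne₁ (i + 1) h]
  choose h hh hhv using fun i => (hv i).2
  have hCs := isCycleSet_iUnion_arc (fun i => (φ (i + 1)).2) hh hhv (fun i => (hv (i + 1)).1) hvne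
    (injOn_iUnion_arc honce φ hh hv fun i => hhv i ▸ hvne i)
  have hthrough : ∀ i, ⟨_, hCs⟩ = φ i ∨ ⟨_, hCs⟩ = φ (i + 1) := fun i =>
    htwo (v i) _ _ _ (hne₁ i).symm (hv i).1 (hv i).2
      ⟨h i, Set.mem_iUnion.2 ⟨i, mem_arc_self⟩, hhv i⟩
  have hnot : ∀ j, ⟨_, hCs⟩ ≠ φ j := fun j hj => by
    rcases hthrough (j + 1) with h' | h' <;> rw [hj] at h'
    exacts [hne₁ j h'.symm, hne₂ j h'.symm]
  exact (hthrough 0).elim (hnot 0) (hnot _)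

theorem meetGraph_isAcyclic (htwo : AtMostTwoCyclesThrough s t)
    (honce : CyclesMeetAtMostOnce s t) : (meetGraph s t).IsAcyclic := by
  by_contra h
  obtain ⟨m, hm⟩ := exists_cycleGraph_isIndContained h
  exact not_cycleGraph_isIndContained htwo honce m hm

end BrauerQuiver

/-- let `Q` be a finite connected quiver in which every arrow lies on a
cycle, every vertex lies on exactly two cycles, and two distinct cycles share at most
one vertex (a Brauer quiver).  Then the graph whose vertices are the cycles of `Q`, two
cycles being adjacent when they meet, is a tree; consequently the cycles can be
2-colored so that intersecting cycles get different colors. -/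
theorem stmt13 (V E : Type*) [Nonempty V] (s t : E → V)
    -- `Q` is connected:
    (hconn : ∀ v w : V, Relation.ReflTransGen
      (fun a b => ∃ e : E, (s e = a ∧ t e = b) ∨ (s e = b ∧ t e = a)) v w)
    -- every arrow lies on a cycle:
    (harrow : ∀ e : E, ∃ C : Set E, IsCycleSet s t C ∧ e ∈ C)
    -- every vertex lies on exactly two cycles:
    (hvert : ∀ v : V, ∃ C₁ C₂ : Set E, IsCycleSet s t C₁ ∧ IsCycleSet s t C₂ ∧
      C₁ ≠ C₂ ∧ v ∈ verts s C₁ ∧ v ∈ verts s C₂ ∧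
      ∀ C : Set E, IsCycleSet s t C → v ∈ verts s C → C = C₁ ∨ C = C₂)
    -- two distinct cycles have at most one vertex in common:
    (hmeet : ∀ C₁ C₂ : Set E, IsCycleSet s t C₁ → IsCycleSet s t C₂ → C₁ ≠ C₂ →
      (verts s C₁ ∩ verts s C₂).Subsingleton) :
    (SimpleGraph.mk
      (fun C₁ C₂ : {C : Set E // IsCycleSet s t C} =>
        C₁ ≠ C₂ ∧ (verts s C₁.1 ∩ verts s C₂.1).Nonempty)
      ⟨fun C₁ C₂ h => ⟨h.1.symm, by rw [Set.inter_comm]; exact h.2⟩⟩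
      ⟨fun C h => h.1 rfl⟩).IsTree ∧
    ∃ color : {C : Set E // IsCycleSet s t C} → Bool,
      ∀ C₁ C₂ : {C : Set E // IsCycleSet s t C},
        C₁ ≠ C₂ → (verts s C₁.1 ∩ verts s C₂.1).Nonempty → color C₁ ≠ color C₂ := by
  have htwo : AtMostTwoCyclesThrough s t := fun x C₁ C₂ C h12 h₁ h₂ h => by
    obtain ⟨D₁, D₂, -, -, -, -, -, huniq⟩ := hvert x
    have := huniq _ C₁.2 h₁
    have := huniq _ C₂.2 h₂
    have := huniq _ C.2 h
    grind [Subtype.ext_iff]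
  have htree : (meetGraph s t).IsTree :=
    ⟨meetGraph_connected hconn harrow fun x =>
      let ⟨C, _, hC, _, _, hx, _⟩ := hvert x; ⟨⟨C, hC⟩, hx⟩,
     meetGraph_isAcyclic htwo fun C₁ C₂ h => hmeet _ _ C₁.2 C₂.2 (Subtype.coe_injective.ne h)⟩
  obtain ⟨c⟩ := htree.colorable_two
  exact ⟨htree, fun C => finTwoEquiv (c C), fun _ _ hne hmeet =>
    finTwoEquiv.injective.ne (c.valid (meetGraph_adj.2 ⟨hne, hmeet⟩))⟩
end
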